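/- arXiv:1108.2581 — 4 statements merged into one kernel-verified Lean document; each statement's English description precedes it below -/
import Mathlib

section
/- Let H be a Hadamard matrix of order k (entries ±1 with H·Hᵀ = k·I). Then the matrix W = [[A, A, H, −H], [A, A, −H, H], [Hᵀ, −Hᵀ, A, A], [−Hᵀ, Hᵀ, A, A]] (a 4k×4k block matrix), where A = u³I − u⁻¹(J − I) and (u² + u⁻²)² = k, satisfies the type II condition: ∑ₓ W(a,x)/W(b,x) = 4k·δ_{a,b}. -/
open Matrix Finset

noncomputable section

abbrev Idx (k : ℕ) := Fin k × ZMod 2 × ZMod 2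

/-- The Potts model `A = u³ I - u⁻¹ (J - I)`. -/
def potts (k : ℕ) (u : ℂ) : Matrix (Fin k) (Fin k) ℂ :=
  Matrix.of fun a b => if a = b then u ^ 3 else -u⁻¹

/-- `H` is a Hadamard matrix: entries `±1` with `H Hᵀ = k I`. -/
def IsHadamard {k : ℕ} (H : Matrix (Fin k) (Fin k) ℂ) : Prop :=
  (∀ a b, H a b = 1 ∨ H a b = -1) ∧ H * Hᵀ = (k : ℂ) • 1

/-- `(-1)^(a+b)` for `a b : ZMod 2`. -/
def sgn (a b : ZMod 2) : ℂ := if a = b then 1 else -1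

/-- `(-1)^s` for `s : ZMod 2`. -/
def pm (s : ZMod 2) : ℂ := if s = 0 then 1 else -1

/-- Normalized symmetric Hadamard model `W̃`, blocks indexed by `(ℤ/2)²`
in the order (0,0),(0,1),(1,0),(1,1). -/
def Wt {k : ℕ} (H : Matrix (Fin k) (Fin k) ℂ) (u : ℂ) : Matrix (Idx k) (Idx k) ℂ :=
  Matrix.of fun p q =>
    if p.2.1 = q.2.1 then potts k u p.1 q.1
    else if p.2.1 = 0 then sgn p.2.2 q.2.2 * H p.1 q.1
    else sgn p.2.2 q.2.2 * H q.1 p.1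

/-- Normalized nonsymmetric Hadamard model `W̃'` (with `im` a primitive 4th root of unity). -/
def Wtp {k : ℕ} (H : Matrix (Fin k) (Fin k) ℂ) (u im : ℂ) : Matrix (Idx k) (Idx k) ℂ :=
  Matrix.of fun p q =>
    if p.2.1 = q.2.1 then potts k u p.1 q.1
    else if p.2.1 = 0 then sgn p.2.2 q.2.2 * H p.1 q.1
    else im * sgn p.2.2 q.2.2 * H q.1 p.1

/-- Hadamard model `W` with 4th root of unity `ω`. -/
def Wom {k : ℕ} (H : Matrix (Fin k) (Fin k) ℂ) (u ω : ℂ) : Matrix (Idx k) (Idx k) ℂ :=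
  Matrix.of fun p q =>
    if p.2.1 = q.2.1 then potts k u p.1 q.1
    else if p.2.1 = 0 then ω * sgn p.2.2 q.2.2 * H p.1 q.1
    else ω * sgn p.2.2 q.2.2 * H q.1 p.1

/-- Nonsymmetric Hadamard model `W'` with primitive 8th root of unity `ξ`. -/
def Wp {k : ℕ} (H : Matrix (Fin k) (Fin k) ℂ) (u ξ : ℂ) : Matrix (Idx k) (Idx k) ℂ :=
  Matrix.of fun p q =>
    if p.2.1 = q.2.1 then potts k u p.1 q.1
    else if p.2.1 = 0 then ξ * sgn p.2.2 q.2.2 * H p.1 q.1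
    else -ξ * sgn p.2.2 q.2.2 * H q.1 p.1

/-- Distance matrices of the Hadamard graph. -/
def Amat0 (k : ℕ) : Matrix (Idx k) (Idx k) ℂ := 1

def Amat1 {k : ℕ} (H : Matrix (Fin k) (Fin k) ℂ) : Matrix (Idx k) (Idx k) ℂ :=
  Matrix.of fun p q =>
    if p.2.1 = q.2.1 then 0
    else if p.2.1 = 0 then (1 + sgn p.2.2 q.2.2 * H p.1 q.1) / 2
    else (1 + sgn p.2.2 q.2.2 * H q.1 p.1) / 2

def Amat2 (k : ℕ) : Matrix (Idx k) (Idx k) ℂ :=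
  Matrix.of fun p q => if p.2.1 = q.2.1 ∧ p.1 ≠ q.1 then 1 else 0

def Amat3 {k : ℕ} (H : Matrix (Fin k) (Fin k) ℂ) : Matrix (Idx k) (Idx k) ℂ :=
  Matrix.of fun p q =>
    if p.2.1 = q.2.1 then 0
    else if p.2.1 = 0 then (1 - sgn p.2.2 q.2.2 * H p.1 q.1) / 2
    else (1 - sgn p.2.2 q.2.2 * H q.1 p.1) / 2

def Amat4 (k : ℕ) : Matrix (Idx k) (Idx k) ℂ :=
  Matrix.of fun p q => if p.1 = q.1 ∧ p.2.1 = q.2.1 ∧ p.2.2 ≠ q.2.2 then 1 else 0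

/-- Adjacency matrix of the directed Hadamard graph. -/
def Amat1' {k : ℕ} (H : Matrix (Fin k) (Fin k) ℂ) : Matrix (Idx k) (Idx k) ℂ :=
  Matrix.of fun p q =>
    if p.2.1 = q.2.1 then 0
    else if p.2.1 = 0 then (1 + sgn p.2.2 q.2.2 * H p.1 q.1) / 2
    else (1 - sgn p.2.2 q.2.2 * H q.1 p.1) / 2

/-- The column vector `Y_{ab}^{αβ}` associated with a matrix `W`. -/
def Yvec {k : ℕ} (W : Matrix (Idx k) (Idx k) ℂ) (a : Fin k) (α : ZMod 2 × ZMod 2)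
    (b : Fin k) (β : ZMod 2 × ZMod 2) : Idx k → ℂ :=
  fun x => W x (a, α) / W x (b, β)

/-- The permutation `τ(α₁,α₂) = (α₁, α₁+α₂)` of `(ℤ/2)²`. -/
def tau : ZMod 2 × ZMod 2 → ZMod 2 × ZMod 2 := fun α => (α.1, α.1 + α.2)

/-- The relation `R₁` of the Hadamard graph scheme. -/
def RelR1 {k : ℕ} (H : Matrix (Fin k) (Fin k) ℂ) : Set (Idx k × Idx k) :=
  {pq | (pq.1.2.1 = 0 ∧ pq.2.2.1 = 1 ∧ H pq.1.1 pq.2.1 = pm (pq.1.2.2 + pq.2.2.2)) ∨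
        (pq.1.2.1 = 1 ∧ pq.2.2.1 = 0 ∧ H pq.2.1 pq.1.1 = pm (pq.1.2.2 + pq.2.2.2))}

/-- The relation `R₃` of the Hadamard graph scheme. -/
def RelR3 {k : ℕ} (H : Matrix (Fin k) (Fin k) ℂ) : Set (Idx k × Idx k) :=
  {pq | (pq.1.2.1 = 0 ∧ pq.2.2.1 = 1 ∧ H pq.1.1 pq.2.1 = pm (pq.1.2.2 + pq.2.2.2 + 1)) ∨
        (pq.1.2.1 = 1 ∧ pq.2.2.1 = 0 ∧ H pq.2.1 pq.1.1 = pm (pq.1.2.2 + pq.2.2.2 + 1))}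

/-- The relation `R'₁` of the directed Hadamard graph scheme. -/
def RelR1' {k : ℕ} (H : Matrix (Fin k) (Fin k) ℂ) : Set (Idx k × Idx k) :=
  {pq | (pq.1.2.1 = 0 ∧ pq.2.2.1 = 1 ∧ H pq.1.1 pq.2.1 = pm (pq.1.2.2 + pq.2.2.2)) ∨
        (pq.1.2.1 = 1 ∧ pq.2.2.1 = 0 ∧ H pq.2.1 pq.1.1 = pm (pq.1.2.2 + pq.2.2.2 + 1))}

/-- The relation `R'₃` of the directed Hadamard graph scheme. -/
def RelR3' {k : ℕ} (H : Matrix (Fin k) (Fin k) ℂ) : Set (Idx k × Idx k) :=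
  {pq | (pq.1.2.1 = 0 ∧ pq.2.2.1 = 1 ∧ H pq.1.1 pq.2.1 = pm (pq.1.2.2 + pq.2.2.2 + 1)) ∨
        (pq.1.2.1 = 1 ∧ pq.2.2.1 = 0 ∧ H pq.2.1 pq.1.1 = pm (pq.1.2.2 + pq.2.2.2))}

/-!
Index `Idx k` by `(a, α, α')`, where `α` is the block row and `α'` the sign within it. Then
`Wt (a, α, α') (x, s, t)` is `A a x` if `s = α` and `(-1)^(α'+t) M a x` otherwise, with `M = H` or
`Hᵀ` according to `α`. For rows in different block rows every quotient depends on `t` through a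
single sign `(-1)^(α'+t)` or `(-1)^(β'+t)`, which sums to zero over `t`. For rows in the same block
row the sum is `2 ∑ₓ A a x / A b x + 2 (-1)^(α'+β') ∑ₓ M a x / M b x`. The Potts model `A` is type II
when `(u² + u⁻²)² = k`, and so is every Hadamard matrix `M`, since its entries satisfy `1/h = h`;
hence the sum is `2k δ_ab (1 + (-1)^(α'+β')) = 4k δ`.
-/

def IsTypeII {n K : Type*} [Fintype n] [DecidableEq n] [Field K] (W : Matrix n n K) : Prop :=
  ∀ a b, ∑ x, W a x / W b x = Fintype.card n * if a = b then 1 else 0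

section Sign

lemma ZMod.eq_zero_or_eq_one_of_two (s : ZMod 2) : s = 0 ∨ s = 1 := by
  revert s; decide

lemma ZMod.eq_of_ne_of_ne_of_two {a b c : ZMod 2} (hab : a ≠ b) (hac : a ≠ c) : b = c := by
  revert a b c; decide

lemma ZMod.sum_univ_two {M : Type*} [AddCommMonoid M] (f : ZMod 2 → M) :
    ∑ s, f s = f 0 + f 1 :=
  Fin.sum_univ_two f

lemma ZMod.sum_ite_eq_add_two {M : Type*} [AddCommMonoid M] (a : ZMod 2) (x y : M) :
    ∑ s, (if a = s then x else y) = x + y := by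
  rcases ZMod.eq_zero_or_eq_one_of_two a with rfl | rfl <;>
    simp +decide [ZMod.sum_univ_two, add_comm]

lemma sum_sgn (a : ZMod 2) : ∑ t, sgn a t = 0 := by
  rcases ZMod.eq_zero_or_eq_one_of_two a with rfl | rfl <;>
    simp +decide [sgn, ZMod.sum_univ_two]

lemma inv_sgn (a b : ZMod 2) : (sgn a b)⁻¹ = sgn a b := by
  unfold sgn; split_ifs <;> norm_num

lemma sgn_div_sgn (a b t : ZMod 2) : sgn a t / sgn b t = sgn a b := by
  rcases ZMod.eq_zero_or_eq_one_of_two a with rfl | rfl <;>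
  rcases ZMod.eq_zero_or_eq_one_of_two b with rfl | rfl <;>
  rcases ZMod.eq_zero_or_eq_one_of_two t with rfl | rfl <;> simp +decide [sgn]

lemma one_add_sgn (a b : ZMod 2) : 1 + sgn a b = 2 * if a = b then 1 else 0 := by
  unfold sgn; split_ifs <;> norm_num

end Sign

namespace IsHadamard

variable {k : ℕ} {H : Matrix (Fin k) (Fin k) ℂ}

lemma transpose_mul_self (hH : _root_.IsHadamard H) : Hᵀ * H = (k : ℂ) • 1 := by
  rcases eq_or_ne k 0 with rfl | hk
  · exact Subsingleton.elim _ _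
  have hk' : (k : ℂ) ≠ 0 := Nat.cast_ne_zero.mpr hk
  have hinv : ((k : ℂ)⁻¹ • Hᵀ) * H = 1 := mul_eq_one_comm.mp <| by
    rw [Matrix.mul_smul, hH.2, smul_smul, inv_mul_cancel₀ hk', one_smul]
  calc Hᵀ * H = (k : ℂ) • (((k : ℂ)⁻¹ • Hᵀ) * H) := by
        rw [Matrix.smul_mul, smul_smul, mul_inv_cancel₀ hk', one_smul]
    _ = (k : ℂ) • 1 := by rw [hinv]

lemma transpose (hH : _root_.IsHadamard H) : _root_.IsHadamard Hᵀ :=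
  ⟨fun a b => hH.1 b a, by rw [transpose_transpose, hH.transpose_mul_self]⟩

lemma isTypeII (hH : _root_.IsHadamard H) : IsTypeII H := by
  intro a b
  have hrow := congrFun (congrFun hH.2 a) b
  simp only [mul_apply, transpose_apply, Matrix.smul_apply, one_apply, smul_eq_mul] at hrow
  rw [Fintype.card_fin, ← hrow]
  refine sum_congr rfl fun x _ => ?_
  rcases hH.1 b x with h | h <;> simp [h, div_neg]

end IsHadamard

section Potts

variable {k : ℕ} {u : ℂ}

lemma potts_apply_ne_zero (hu : u ≠ 0) (a b : Fin k) : potts k u a b ≠ 0 := by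
  simp only [potts, of_apply]
  split_ifs <;> simp [hu]

lemma potts_div_potts_of_ne (hu : u ≠ 0) {a b : Fin k} (hab : a ≠ b) (x : Fin k) :
    potts k u a x / potts k u b x
      = 1 + (if x = a then -u ^ 4 - 1 else 0) + (if x = b then -(u ^ 4)⁻¹ - 1 else 0) := by
  simp only [potts, of_apply]
  split_ifs <;> subst_vars <;> first | contradiction | (field_simp; ring)

lemma potts_isTypeII (hu : (u ^ 2 + (u ^ 2)⁻¹) ^ 2 = k) : IsTypeII (potts k u) := by
  intro a b
  have hk : (k : ℂ) ≠ 0 := Nat.cast_ne_zero.mpr a.pos.ne'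
  have hu0 : u ≠ 0 := by
    rintro rfl
    apply hk
    rw [← hu]
    simp
  rw [Fintype.card_fin]
  by_cases hab : a = b
  · subst hab
    simp [div_self (potts_apply_ne_zero hu0 a _)]
  · rw [sum_congr rfl fun x _ => potts_div_potts_of_ne hu0 hab x]
    simp only [sum_add_distrib, sum_const, card_univ, Fintype.card_fin, sum_ite_eq', mem_univ,
      if_true, if_neg hab, nsmul_eq_mul, mul_one, mul_zero]
    -- `k - 2 - u⁴ - u⁻⁴` vanishes because `(u² + u⁻²)² = u⁴ + 2 + u⁻⁴`
    rw [← hu]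
    field_simp
    ring

end Potts

lemma card_Idx (k : ℕ) : Fintype.card (Idx k) = 4 * k := by
  simp only [Fintype.card_prod, Fintype.card_fin, ZMod.card]
  ring

section HadamardModel

variable {k : ℕ}

def hadamardBlock (H : Matrix (Fin k) (Fin k) ℂ) (s : ZMod 2) : Matrix (Fin k) (Fin k) ℂ :=
  if s = 0 then H else Hᵀ

lemma isHadamard_hadamardBlock {H : Matrix (Fin k) (Fin k) ℂ} (hH : _root_.IsHadamard H)
    (s : ZMod 2) : _root_.IsHadamard (hadamardBlock H s) := by
  unfold hadamardBlock
  split_ifs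
  exacts [hH, hH.transpose]

variable (H : Matrix (Fin k) (Fin k) ℂ) (u : ℂ)

lemma Wt_apply (a x : Fin k) (α α' s t : ZMod 2) :
    Wt H u (a, α, α') (x, s, t)
      = if α = s then potts k u a x else sgn α' t * hadamardBlock H α a x := by
  simp only [Wt, of_apply, hadamardBlock]
  split_ifs <;> rfl

lemma sum_Wt_div_Wt_of_ne {α β : ZMod 2} (hαβ : α ≠ β) (a b : Fin k) (α' β' : ZMod 2) :
    ∑ x, Wt H u (a, α, α') x / Wt H u (b, β, β') x = 0 := by
  simp only [Fintype.sum_prod_type, Wt_apply]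
  refine sum_eq_zero fun x _ => sum_eq_zero fun s _ => ?_
  by_cases hs : α = s
  · have hβs : β ≠ s := fun h => hαβ (hs.trans h.symm)
    simp [hs, hβs, div_eq_mul_inv, inv_sgn, ← mul_sum, sum_sgn]
  · have hβs : β = s := ZMod.eq_of_ne_of_ne_of_two hαβ hs
    simp [hs, hβs, div_eq_mul_inv, ← sum_mul, sum_sgn]

lemma sum_Wt_div_Wt_same_block (a b : Fin k) (α α' β' : ZMod 2) :
    ∑ x, Wt H u (a, α, α') x / Wt H u (b, α, β') x
      = 2 * ∑ x, potts k u a x / potts k u b x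
        + 2 * sgn α' β' * ∑ x, hadamardBlock H α a x / hadamardBlock H α b x := by
  set M := hadamardBlock H α
  have hterm : ∀ x s t, Wt H u (a, α, α') (x, s, t) / Wt H u (b, α, β') (x, s, t)
      = if α = s then potts k u a x / potts k u b x else sgn α' β' * (M a x / M b x) := by
    intro x s t
    rw [Wt_apply, Wt_apply]
    split_ifs
    · rfl
    · rw [mul_div_mul_comm, sgn_div_sgn]
  have hfiber : ∀ x, ∑ s, ∑ t, Wt H u (a, α, α') (x, s, t) / Wt H u (b, α, β') (x, s, t)
      = 2 * (potts k u a x / potts k u b x) + 2 * sgn α' β' * (M a x / M b x) := by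
    intro x
    simp only [hterm, sum_const, card_univ, ZMod.card]
    rw [← smul_sum, ZMod.sum_ite_eq_add_two, two_nsmul]
    ring
  simp only [Fintype.sum_prod_type, hfiber, sum_add_distrib, mul_sum]

variable {H u} in
lemma Wt_isTypeII (hH : _root_.IsHadamard H)
    (hu : (u ^ 2 + (u ^ 2)⁻¹) ^ 2 = k) : IsTypeII (Wt H u) := by
  rintro ⟨a, α, α'⟩ ⟨b, β, β'⟩
  rcases eq_or_ne α β with rfl | hαβ
  · rw [sum_Wt_div_Wt_same_block, potts_isTypeII hu a b,
      (isHadamard_hadamardBlock hH α).isTypeII a b, card_Idx, Fintype.card_fin]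
    calc _ = 2 * k * (if a = b then 1 else 0) * (1 + sgn α' β') := by ring
      _ = _ := by
        rw [one_add_sgn]
        simp only [Prod.mk.injEq, true_and, ite_and]
        split_ifs <;> push_cast <;> ring
  · simp [sum_Wt_div_Wt_of_ne H u hαβ, Prod.ext_iff, hαβ]

end HadamardModel

/-- the (normalized) symmetric Hadamard model is a type II matrix. -/
theorem hadamardModel_typeII (k : ℕ) (H : Matrix (Fin k) (Fin k) ℂ)
    (hH : _root_.IsHadamard H) (u : ℂ) (hu : (u ^ 2 + (u ^ 2)⁻¹) ^ 2 = (k : ℂ)) :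
    ∀ a b : Idx k, ∑ x, Wt H u a x / Wt H u b x
      = ((4 * k : ℕ) : ℂ) * (if a = b then 1 else 0) := by
  intro a b
  rw [Wt_isTypeII hH hu a b, card_Idx]
end
end

section
/- In the setting of the normalized symmetric Hadamard model W̃ indexed by X × (ℤ/2ℤ)², let τ be the permutation of (ℤ/2ℤ)² defined by τ(α₁,α₂) = (α₁, α₁+α₂), and let D be the diagonal matrix with entry 1 on X×{(0,0)} ∪ X×{(0,1)} and i on X×{(1,0)} ∪ X×{(1,1)}. Then for all (a,α), (b,β) ∈ X × (ℤ/2ℤ)², the column vector Y^{τ(α)β}_{ab} equals (−D²)^{α₁} · Y^{αβ}_{ab}. -/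
open Matrix Finset

noncomputable section

/-- The diagonal of `D`: `1` on the blocks with `α₁ = 0` and `i` on those with `α₁ = 1`. -/
def blockPhase (k : ℕ) (p : Idx k) : ℂ := if p.2.1 = 0 then 1 else Complex.I

lemma neg_blockPhase_sq {k : ℕ} (p : Idx k) :
    -blockPhase k p ^ 2 = if p.2.1 = 0 then -1 else 1 := by
  unfold blockPhase
  split_ifs <;> simp

lemma neg_diagonal_blockPhase_sq_pow (k n : ℕ) :
    (-(diagonal (blockPhase k)) ^ 2) ^ n = diagonal fun p => (-blockPhase k p ^ 2) ^ n := by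
  rw [diagonal_pow, diagonal_neg, diagonal_pow]
  rfl

lemma ZMod.eq_zero_or_eq_one (z : ZMod 2) : z = 0 ∨ z = 1 := by
  revert z; decide

lemma sgn_one_add_right (s t : ZMod 2) : sgn s (1 + t) = -sgn s t := by
  rcases ZMod.eq_zero_or_eq_one s with rfl | rfl <;>
    rcases ZMod.eq_zero_or_eq_one t with rfl | rfl <;>
    simp [sgn, show (1 + 1 : ZMod 2) = 0 from rfl]

/-- Shifting `α₂` inside the block `α₁ = 1` flips the sign of the Hadamard blocks `x₁ = 0`
and leaves the Potts block `x₁ = 1` unchanged. -/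
lemma Wt_apply_tau {k : ℕ} (H : Matrix (Fin k) (Fin k) ℂ) (u : ℂ) (x : Idx k) (a : Fin k)
    (α : ZMod 2 × ZMod 2) :
    Wt H u x (a, tau α) = (-blockPhase k x ^ 2) ^ α.1.val * Wt H u x (a, α) := by
  obtain ⟨α₁, α₂⟩ := α
  rcases ZMod.eq_zero_or_eq_one α₁ with rfl | rfl
  · simp [tau]
  · rw [neg_blockPhase_sq, show (1 : ZMod 2).val = 1 from rfl, pow_one]
    rcases ZMod.eq_zero_or_eq_one x.2.1 with hx | hx <;>
      simp [Wt, tau, hx, sgn_one_add_right]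

lemma Yvec_eq_diagonal_mulVec {k : ℕ} {W : Matrix (Idx k) (Idx k) ℂ} {c : Idx k → ℂ}
    {a b : Fin k} {α α' β : ZMod 2 × ZMod 2} (h : ∀ x, W x (a, α') = c x * W x (a, α)) :
    Yvec W a α' b β = diagonal c *ᵥ Yvec W a α b β := by
  funext x
  rw [mulVec_diagonal, Yvec, Yvec, h, mul_div_assoc]

theorem Yvec_tau_general (k : ℕ) (H : Matrix (Fin k) (Fin k) ℂ)
    (u : ℂ) :
    ∀ (a b : Fin k) (α β : ZMod 2 × ZMod 2),
      Yvec (Wt H u) a (tau α) b β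
        = ((-((Matrix.diagonal (fun p : Idx k =>
              if p.2.1 = 0 then 1 else Complex.I)) ^ 2)) ^ α.1.val).mulVec
            (Yvec (Wt H u) a α b β) := by
  intro a b α β
  change _ = (-(diagonal (blockPhase k)) ^ 2) ^ α.1.val *ᵥ _
  rw [neg_diagonal_blockPhase_sq_pow]
  exact Yvec_eq_diagonal_mulVec fun x => Wt_apply_tau H u x a α

/-- `Y^{τ(α)β}_{ab} = (-D²)^{α₁} Y^{αβ}_{ab}` for the symmetric
normalized Hadamard model. -/
theorem Yvec_tau (k : ℕ) (H : Matrix (Fin k) (Fin k) ℂ) (hH : _root_.IsHadamard H)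
    (u : ℂ) (hu : (u ^ 2 + (u ^ 2)⁻¹) ^ 2 = (k : ℂ)) :
    ∀ (a b : Fin k) (α β : ZMod 2 × ZMod 2),
      Yvec (Wt H u) a (tau α) b β
        = ((-((Matrix.diagonal (fun p : Idx k =>
              if p.2.1 = 0 then 1 else Complex.I)) ^ 2)) ^ α.1.val).mulVec
            (Yvec (Wt H u) a α b β) :=
  Yvec_tau_general k H u
end
end

section
/- Define τ: (ℤ/2ℤ)² → (ℤ/2ℤ)² by τ(α₁,α₂) = (α₁, α₁+α₂), and σ: (X×(ℤ/2ℤ)²)² → (X×(ℤ/2ℤ)²)² by σ((a,α),(b,β)) = ((a,τ(α)),(b,β)). With R₁, R₃, R'₁, R'₃ the relations of the Hadamard and directed Hadamard association schemes as defined below, σ(R₁) = R'₁ and σ(R₃) = R'₃. -/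
open Matrix Finset

noncomputable section

theorem tau_involutive : Function.Involutive tau := by
  unfold Function.Involutive; decide

@[simp]
theorem tau_fst (α : ZMod 2 × ZMod 2) : (tau α).1 = α.1 := rfl

/-- `τ` shifts the exponent `α₂ + β₂` by `α₁`, so only on the block `(α₁, β₁) = (1, 0)`,
which is exactly where the sign conditions of `R₁, R₃` and `R'₁, R'₃` differ. -/
theorem tau_snd_add (α : ZMod 2 × ZMod 2) (b : ZMod 2) : (tau α).2 + b = α.2 + b + α.1 := by
  simp only [tau]; ring

def sigma (k : ℕ) : Idx k × Idx k → Idx k × Idx k := fun pq => ((pq.1.1, tau pq.1.2), pq.2)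

theorem sigma_involutive (k : ℕ) : Function.Involutive (sigma k) := by
  rintro ⟨⟨a, α⟩, q⟩
  simp only [sigma, tau_involutive α]

theorem sigma_mem_relR1_iff {k : ℕ} (H : Matrix (Fin k) (Fin k) ℂ) (pq : Idx k × Idx k) :
    sigma k pq ∈ RelR1 H ↔ pq ∈ RelR1' H := by
  obtain ⟨⟨a, α₁, α₂⟩, b, β₁, β₂⟩ := pq
  simp only [sigma, RelR1, RelR1', Set.mem_ofPred_eq, tau_snd_add]
  obtain rfl | rfl : α₁ = 0 ∨ α₁ = 1 := by revert α₁; decide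
  all_goals simp

theorem sigma_mem_relR3_iff {k : ℕ} (H : Matrix (Fin k) (Fin k) ℂ) (pq : Idx k × Idx k) :
    sigma k pq ∈ RelR3 H ↔ pq ∈ RelR3' H := by
  obtain ⟨⟨a, α₁, α₂⟩, b, β₁, β₂⟩ := pq
  simp only [sigma, RelR3, RelR3', Set.mem_ofPred_eq, tau_snd_add]
  obtain rfl | rfl : α₁ = 0 ∨ α₁ = 1 := by revert α₁; decide
  all_goals simp [add_assoc, CharTwo.add_self_eq_zero]

theorem sigma_maps_relations_general (k : ℕ) (H : Matrix (Fin k) (Fin k) ℂ) :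
    (fun pq : Idx k × Idx k => ((pq.1.1, tau pq.1.2), pq.2)) '' RelR1 H = RelR1' H ∧
    (fun pq : Idx k × Idx k => ((pq.1.1, tau pq.1.2), pq.2)) '' RelR3 H = RelR3' H := by
  change sigma k '' _ = _ ∧ sigma k '' _ = _
  rw [(sigma_involutive k).image_eq_preimage_symm]
  exact ⟨Set.ext (sigma_mem_relR1_iff H), Set.ext (sigma_mem_relR3_iff H)⟩

/-- the permutation `σ((a,α),(b,β)) = ((a,τ(α)),(b,β))` maps `R₁`
onto `R'₁` and `R₃` onto `R'₃`. -/
theorem sigma_maps_relations (k : ℕ) (H : Matrix (Fin k) (Fin k) ℂ)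
    (hH : _root_.IsHadamard H) :
    (fun pq : Idx k × Idx k => ((pq.1.1, tau pq.1.2), pq.2)) '' RelR1 H = RelR1' H ∧
    (fun pq : Idx k × Idx k => ((pq.1.1, tau pq.1.2), pq.2)) '' RelR3 H = RelR3' H :=
  sigma_maps_relations_general k H
end
end

section
/- Let H be a Hadamard matrix of order k indexed by X, and define on X × (ℤ/2ℤ)² the relations R₀ (equality), R₂ = {((a,α),(b,β)) : α₁ = β₁, a ≠ b}, R₄ = {((a,α),(b,β)) : a = b, α₁ = β₁, α₂ ≠ β₂}, together with R₁ and R₃ as defined below. Then R₀, R₁, R₂, R₃, R₄ partition (X × (ℤ/2ℤ)²)², each is symmetric (invariant under swapping the pair), and their adjacency 0-1 matrices coincide with the distance matrices A₀, A₁, A₂, A₃, A₄ of the Hadamard graph. -/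
open Matrix Finset

noncomputable section

def RelR0 (k : ℕ) : Set (Idx k × Idx k) := {pq | pq.1 = pq.2}

def RelR2 (k : ℕ) : Set (Idx k × Idx k) :=
  {pq | pq.1.2.1 = pq.2.2.1 ∧ pq.1.1 ≠ pq.2.1}

def RelR4 (k : ℕ) : Set (Idx k × Idx k) :=
  {pq | pq.1.1 = pq.2.1 ∧ pq.1.2.1 = pq.2.2.1 ∧ pq.1.2.2 ≠ pq.2.2.2}

/-!
Each pair `(p, q)` lies in exactly one `Rᵢ`, and `i` is a function of the pair: it is read
off from the blocks of `p` and `q` and, for pairs in different `α₁`-blocks, from whether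
the relevant `±1` entry of `H` equals `(-1)^(α₂+β₂)`. Partition and symmetry of the `Rᵢ`
are then properties of the fibres of this function. Since `H` has entries `±1`,
`(1 ± c h) / 2` is the indicator of `h = ±c`, which identifies `A₁` and `A₃` with the
adjacency matrices of `R₁` and `R₃`.
-/

lemma ZMod.two_ne_iff {s t : ZMod 2} : s ≠ t ↔ s = 0 ∧ t = 1 ∨ s = 1 ∧ t = 0 := by
  revert s t; decide

lemma sgn_eq_pm_add (s t : ZMod 2) : sgn s t = pm (s + t) := by
  unfold sgn pm; congr 1; revert s t; decide

lemma pm_add_one (s : ZMod 2) : pm (s + 1) = -pm s := by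
  rcases ZMod.two_ne_iff.mp (by simp : s + 1 ≠ s) with ⟨h, rfl⟩ | ⟨h, rfl⟩ <;>
    simp [pm, h]

lemma pm_eq_one_or_neg_one (s : ZMod 2) : pm s = 1 ∨ pm s = -1 := by
  unfold pm; split_ifs <;> simp

section SignArithmetic

variable {K : Type*} [Field K] [CharZero K] {h c : K}

lemma eq_neg_iff_ne_of_sign (hh : h = 1 ∨ h = -1) (hc : c = 1 ∨ c = -1) :
    h = -c ↔ h ≠ c := by
  rcases hh with rfl | rfl <;> rcases hc with rfl | rfl <;> norm_num

lemma one_add_mul_div_two_of_sign [DecidableEq K] (hh : h = 1 ∨ h = -1) (hc : c = 1 ∨ c = -1) :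
    (1 + c * h) / 2 = if h = c then 1 else 0 := by
  rcases hh with rfl | rfl <;> rcases hc with rfl | rfl <;> norm_num

lemma one_sub_mul_div_two_of_sign [DecidableEq K] (hh : h = 1 ∨ h = -1) (hc : c = 1 ∨ c = -1) :
    (1 - c * h) / 2 = if h = c then 0 else 1 := by
  rcases hh with rfl | rfl <;> rcases hc with rfl | rfl <;> norm_num

end SignArithmetic

section HadamardScheme

variable {k : ℕ} (H : Matrix (Fin k) (Fin k) ℂ)

def crossEntry (p q : Idx k) : ℂ := if p.2.1 = 0 then H p.1 q.1 else H q.1 p.1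

/-- The index `i` with `(p, q) ∈ Rᵢ`: the distance of `p` and `q` in the Hadamard graph. -/
def hadamardClass (p q : Idx k) : Fin 5 :=
  if p.2.1 = q.2.1 then
    if p.1 ≠ q.1 then 2 else if p.2.2 = q.2.2 then 0 else 4
  else if crossEntry H p q = pm (p.2.2 + q.2.2) then 1 else 3

lemma crossEntry_comm {p q : Idx k} (h : p.2.1 ≠ q.2.1) :
    crossEntry H p q = crossEntry H q p := by
  rcases ZMod.two_ne_iff.mp h with ⟨h₀, h₁⟩ | ⟨h₁, h₀⟩ <;>
    simp [crossEntry, h₀, h₁]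

lemma hadamardClass_comm (p q : Idx k) : hadamardClass H p q = hadamardClass H q p := by
  by_cases h : p.2.1 = q.2.1
  · simp [hadamardClass, h, eq_comm]
  · simp [hadamardClass, h, Ne.symm h, crossEntry_comm H h, add_comm]

lemma mem_relR1_iff {p q : Idx k} :
    (p, q) ∈ RelR1 H ↔ p.2.1 ≠ q.2.1 ∧ crossEntry H p q = pm (p.2.2 + q.2.2) := by
  rw [ZMod.two_ne_iff]
  constructor
  · rintro (⟨h₀, h₁, he⟩ | ⟨h₁, h₀, he⟩) <;> simp_all [crossEntry]
  · rintro ⟨⟨h₀, h₁⟩ | ⟨h₁, h₀⟩, he⟩ <;> simp_all [RelR1, crossEntry]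

lemma mem_relR3_iff {p q : Idx k} :
    (p, q) ∈ RelR3 H ↔ p.2.1 ≠ q.2.1 ∧ crossEntry H p q = pm (p.2.2 + q.2.2 + 1) := by
  rw [ZMod.two_ne_iff]
  constructor
  · rintro (⟨h₀, h₁, he⟩ | ⟨h₁, h₀, he⟩) <;> simp_all [crossEntry]
  · rintro ⟨⟨h₀, h₁⟩ | ⟨h₁, h₀⟩, he⟩ <;> simp_all [RelR3, crossEntry]

variable {H}

lemma crossEntry_eq_one_or_neg_one (hH : ∀ a b, H a b = 1 ∨ H a b = -1) (p q : Idx k) :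
    crossEntry H p q = 1 ∨ crossEntry H p q = -1 := by
  unfold crossEntry; split_ifs <;> apply hH

lemma hadamardClass_eq_zero_iff {p q : Idx k} : hadamardClass H p q = 0 ↔ p = q := by
  simp only [hadamardClass, Prod.ext_iff]
  split_ifs <;> simp_all

lemma hadamardClass_eq_one_iff {p q : Idx k} :
    hadamardClass H p q = 1 ↔ p.2.1 ≠ q.2.1 ∧ crossEntry H p q = pm (p.2.2 + q.2.2) := by
  simp only [hadamardClass]
  split_ifs <;> simp_all

lemma hadamardClass_eq_two_iff {p q : Idx k} :
    hadamardClass H p q = 2 ↔ p.2.1 = q.2.1 ∧ p.1 ≠ q.1 := by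
  simp only [hadamardClass]
  split_ifs <;> simp_all

lemma hadamardClass_eq_three_iff {p q : Idx k} :
    hadamardClass H p q = 3 ↔ p.2.1 ≠ q.2.1 ∧ crossEntry H p q ≠ pm (p.2.2 + q.2.2) := by
  simp only [hadamardClass]
  split_ifs <;> simp_all

lemma hadamardClass_eq_four_iff {p q : Idx k} :
    hadamardClass H p q = 4 ↔ p.1 = q.1 ∧ p.2.1 = q.2.1 ∧ p.2.2 ≠ q.2.2 := by
  simp only [hadamardClass]
  split_ifs <;> simp_all

lemma mem_hadamardRel_iff (hH : ∀ a b, H a b = 1 ∨ H a b = -1) (i : Fin 5) (p q : Idx k) :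
    (p, q) ∈ ![RelR0 k, RelR1 H, RelR2 k, RelR3 H, RelR4 k] i ↔ hadamardClass H p q = i := by
  fin_cases i
  · exact hadamardClass_eq_zero_iff.symm
  · exact (mem_relR1_iff H).trans hadamardClass_eq_one_iff.symm
  · exact hadamardClass_eq_two_iff.symm
  · show (p, q) ∈ RelR3 H ↔ hadamardClass H p q = 3
    rw [mem_relR3_iff, pm_add_one, hadamardClass_eq_three_iff,
      eq_neg_iff_ne_of_sign (crossEntry_eq_one_or_neg_one hH p q) (pm_eq_one_or_neg_one _)]
  · exact hadamardClass_eq_four_iff.symm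

variable (H)

lemma amat1_apply (p q : Idx k) : Amat1 H p q =
    if p.2.1 = q.2.1 then 0 else (1 + pm (p.2.2 + q.2.2) * crossEntry H p q) / 2 := by
  simp only [Amat1, Matrix.of_apply, crossEntry, sgn_eq_pm_add]
  split_ifs <;> rfl

lemma amat3_apply (p q : Idx k) : Amat3 H p q =
    if p.2.1 = q.2.1 then 0 else (1 - pm (p.2.2 + q.2.2) * crossEntry H p q) / 2 := by
  simp only [Amat3, Matrix.of_apply, crossEntry, sgn_eq_pm_add]
  split_ifs <;> rfl

variable {H}

lemma hadamardDistMatrix_apply (hH : ∀ a b, H a b = 1 ∨ H a b = -1) (i : Fin 5) (p q : Idx k) :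
    ![Amat0 k, Amat1 H, Amat2 k, Amat3 H, Amat4 k] i p q =
      if hadamardClass H p q = i then 1 else 0 := by
  have hH' := crossEntry_eq_one_or_neg_one hH p q
  have hpm := pm_eq_one_or_neg_one (p.2.2 + q.2.2)
  fin_cases i
  · simp [Amat0, Matrix.one_apply, hadamardClass_eq_zero_iff]
  · show Amat1 H p q = if hadamardClass H p q = 1 then 1 else 0
    rw [amat1_apply, one_add_mul_div_two_of_sign hH' hpm]
    simp only [hadamardClass_eq_one_iff]
    split_ifs <;> simp_all
  · simp [Amat2, hadamardClass_eq_two_iff]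
  · show Amat3 H p q = if hadamardClass H p q = 3 then 1 else 0
    rw [amat3_apply, one_sub_mul_div_two_of_sign hH' hpm]
    simp only [hadamardClass_eq_three_iff]
    split_ifs <;> simp_all
  · simp [Amat4, hadamardClass_eq_four_iff]

end HadamardScheme

open scoped Classical in
/-- `R₀,…,R₄` partition `(X×(ℤ/2)²)²`, each is symmetric, and
their 0-1 adjacency matrices coincide with the distance matrices of the
Hadamard graph. -/
theorem hadamard_relations_partition (k : ℕ) (H : Matrix (Fin k) (Fin k) ℂ)
    (hH : _root_.IsHadamard H) :
    ∀ (Rs : Fin 5 → Set (Idx k × Idx k)) (As : Fin 5 → Matrix (Idx k) (Idx k) ℂ),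
      Rs = ![RelR0 k, RelR1 H, RelR2 k, RelR3 H, RelR4 k] →
      As = ![Amat0 k, Amat1 H, Amat2 k, Amat3 H, Amat4 k] →
      (⋃ i, Rs i) = Set.univ ∧
      (∀ i j, i ≠ j → Rs i ∩ Rs j = ∅) ∧
      (∀ i (p q : Idx k), (p, q) ∈ Rs i ↔ (q, p) ∈ Rs i) ∧
      (∀ i (p q : Idx k), As i p q = if (p, q) ∈ Rs i then 1 else 0) := by
  intro Rs As rfl rfl
  have hmem := mem_hadamardRel_iff hH.1
  refine ⟨?_, ?_, ?_, ?_⟩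
  · ext ⟨p, q⟩
    simp [hmem]
  · intro i j hij
    ext ⟨p, q⟩
    simp only [Set.mem_inter_iff, hmem, Set.mem_empty_iff_false, iff_false, not_and]
    rintro rfl
    exact hij
  · intro i p q
    rw [hmem, hmem, hadamardClass_comm]
  · intro i p q
    rw [hadamardDistMatrix_apply hH.1]
    exact if_congr (hmem i p q).symm rfl rfl
end
end
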